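/- arXiv:2303.01898 — 8 statements merged into one kernel-verified Lean document; each statement's English description precedes it below -/
import Mathlib

section
/- Let M = M[A] over GF(p), T ⊆ E, and M_T = M[A_T]. A circuit C of M with C ∩ T ≠ ∅ is a circuit of M_T if and only if for some (equivalently, every) linear dependence Σ_{x∈C} α_x x = 0 over GF(p) with all α_x ≠ 0, one has Σ_{x∈C∩T} α_x ≡ 0 (mod p). -/
open Set

/-- A subset `S` of the column index set `E` is independent in the vector matroid of the
matrix with columns `A` over `GF(p)` iff the corresponding columns are linearly independent. -/
def MatIndep (p : ℕ) {E : Type} {n : ℕ} (A : E → (Fin n → ZMod p)) (S : Set E) : Prop :=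
  LinearIndependent (ZMod p) (fun x : S => A x.1)

/-- A circuit is a minimal dependent set. -/
def MatCircuit (p : ℕ) {E : Type} {n : ℕ} (A : E → (Fin n → ZMod p)) (C : Set E) : Prop :=
  ¬ MatIndep p A C ∧ ∀ D : Set E, D ⊂ C → MatIndep p A D

/-- The rank of a set of columns: the dimension of their span (equivalently, the maximum
size of an independent subset). -/
noncomputable def matRank (p : ℕ) {E : Type} {n : ℕ} (A : E → (Fin n → ZMod p)) (S : Set E) : ℕ :=
  Module.finrank (ZMod p) (Submodule.span (ZMod p) (A '' S))

/-- The matrix `A_T`: adjoin to `A` an extra row equal to the indicator vector of `T`. -/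
noncomputable def splitMat (p : ℕ) {E : Type} {n : ℕ} (A : E → (Fin n → ZMod p)) (T : Set E) :
    E → (Fin (n + 1) → ZMod p) :=
  fun e => Fin.snoc (A e) (T.indicator (fun _ => (1 : ZMod p)) e)

/-- The matrix `A'_T`: adjoin to `A_T` an extra column `z` (modeled as `none`) whose only
nonzero entry is a `1` in the new last row. -/
noncomputable def elSplitMat (p : ℕ) {E : Type} {n : ℕ} (A : E → (Fin n → ZMod p)) (T : Set E) :
    Option E → (Fin (n + 1) → ZMod p) :=
  fun o => o.elim (Fin.snoc (0 : Fin n → ZMod p) 1) (splitMat p A T)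

/-- An `NPT`-circuit of `M = M[A]`: a circuit of `M` meeting `T` that is independent in
`M_T = M[A_T]` (i.e. not a circuit of `M_T`). -/
def NPTCircuit (p : ℕ) {E : Type} {n : ℕ} (A : E → (Fin n → ZMod p)) (T : Set E)
    (C : Set E) : Prop :=
  MatCircuit p A C ∧ (C ∩ T).Nonempty ∧ MatIndep p (splitMat p A T) C

/-- A basis: a maximal independent set. -/
def MatBasis (p : ℕ) {E : Type} {n : ℕ} (A : E → (Fin n → ZMod p)) (B : Set E) : Prop :=
  MatIndep p A B ∧ ∀ S : Set E, MatIndep p A S → B ⊆ S → S = B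

/-- A cocircuit: a minimal set meeting every basis. -/
def MatCocircuit (p : ℕ) {E : Type} {n : ℕ} (A : E → (Fin n → ZMod p)) (T : Set E) : Prop :=
  (∀ B : Set E, MatBasis p A B → (T ∩ B).Nonempty) ∧
    ∀ T' : Set E, T' ⊂ T → ¬ ∀ B : Set E, MatBasis p A B → (T' ∩ B).Nonempty

/-- Connectedness of the vector matroid of `A`: there is no partition `(X, Xᶜ)` of the
ground set into nonempty sets with `r X + r Xᶜ ≤ r E`. -/
def MatConnected (p : ℕ) {E : Type} {n : ℕ} (A : E → (Fin n → ZMod p)) : Prop :=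
  ∀ X : Set E, X.Nonempty → Xᶜ.Nonempty →
    matRank p A Set.univ < matRank p A X + matRank p A Xᶜ

/-!
A dependence `∑ α_x (A_T)_x = 0` is exactly a dependence `∑ α_x A_x = 0` whose coefficients
over `T` sum to zero, since `A_T` only adds the indicator row of `T`. Proper subsets of `C` stay
independent in `M_T`, so `C` is a circuit of `M_T` iff it is dependent there. Finally, the
dependences supported on a circuit form a line whose nonzero points have full support, so the
condition holds for some full-support dependence iff it holds for all of them.
-/

section MinimallyDependent

variable {K V ι : Type*} [Field K] [AddCommGroup V] [Module K V] {v : ι → V} {C : Finset ι}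

theorem forall_ne_zero_of_dependence (hmin : ∀ D ⊂ (C : Set ι), LinearIndepOn K v D)
    {α : ι → K} (hα : ∑ i ∈ C, α i • v i = 0) (hne : ∃ i ∈ C, α i ≠ 0) :
    ∀ i ∈ C, α i ≠ 0 := by
  classical
  intro j hj hαj
  have hsum : ∑ i ∈ C.erase j, α i • v i = 0 := by
    rwa [Finset.sum_erase _ (by rw [hαj, zero_smul])]
  have hvanish := linearIndepOn_finset_iff.1
    (hmin _ (Finset.coe_ssubset.2 (Finset.erase_ssubset hj))) α hsum
  obtain ⟨i, hi, hαi⟩ := hne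
  by_cases hij : i = j
  · exact hαi (hij ▸ hαj)
  · exact hαi (hvanish i (Finset.mem_erase.2 ⟨hij, hi⟩))

theorem exists_dependence_forall_ne_zero (hdep : ¬ LinearIndepOn K v C)
    (hmin : ∀ D ⊂ (C : Set ι), LinearIndepOn K v D) :
    ∃ α : ι → K, (∀ i ∈ C, α i ≠ 0) ∧ ∑ i ∈ C, α i • v i = 0 := by
  obtain ⟨α, hα, hne⟩ := not_linearIndepOn_finset_iff.1 hdep
  exact ⟨α, forall_ne_zero_of_dependence hmin hα hne, hα⟩

theorem exists_eq_mul_of_dependence (hmin : ∀ D ⊂ (C : Set ι), LinearIndepOn K v D)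
    {α β : ι → K} (hα : ∀ i ∈ C, α i ≠ 0) (hαv : ∑ i ∈ C, α i • v i = 0)
    (hβv : ∑ i ∈ C, β i • v i = 0) : ∃ c : K, ∀ i ∈ C, β i = c * α i := by
  rcases C.eq_empty_or_nonempty with rfl | ⟨i₀, hi₀⟩
  · exact ⟨0, by simp⟩
  set c := β i₀ / α i₀
  -- `β - c • α` is a dependence vanishing at `i₀`, hence it vanishes on all of `C`.
  have hγv : ∑ i ∈ C, (β i - c * α i) • v i = 0 := by
    simp only [sub_smul, mul_smul, Finset.sum_sub_distrib, ← Finset.smul_sum, hαv, hβv,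
      smul_zero, sub_zero]
  have hγ₀ : β i₀ - c * α i₀ = 0 := by
    rw [div_mul_cancel₀ _ (hα i₀ hi₀), sub_self]
  refine ⟨c, fun i hi => sub_eq_zero.1 ?_⟩
  by_contra hγi
  exact forall_ne_zero_of_dependence hmin hγv ⟨i, hi, hγi⟩ i₀ hi₀ hγ₀

end MinimallyDependent

theorem Fin.snoc_eq_zero_iff {M : Type*} [Zero M] {n : ℕ} (f : Fin n → M) (a : M) :
    (Fin.snoc f a : Fin (n + 1) → M) = 0 ↔ f = 0 ∧ a = 0 := by
  rw [← Fin.snoc_init_self (0 : Fin (n + 1) → M), Fin.snoc_inj]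
  rfl

section SplitMatrix

variable {p n : ℕ} {E : Type} (A : E → (Fin n → ZMod p)) (T : Set E)

theorem matIndep_iff_linearIndepOn {S : Set E} :
    MatIndep p A S ↔ LinearIndepOn (ZMod p) A S :=
  Iff.rfl

theorem MatCircuit.nonempty {C : Set E} (hC : MatCircuit p A C) : C.Nonempty :=
  nonempty_iff_ne_empty.2 fun h => hC.1 (h ▸ linearIndepOn_empty _ _)

theorem splitMat_sum [DecidablePred (· ∈ T)] (C : Finset E) (α : E → ZMod p) :
    ∑ x ∈ C, α x • splitMat p A T x =
      Fin.snoc (∑ x ∈ C, α x • A x) (∑ x ∈ C.filter (· ∈ T), α x) := by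
  funext i
  refine Fin.lastCases ?_ (fun j => ?_) i
  · simp [Finset.sum_apply, splitMat, Set.indicator_apply, Finset.sum_filter]
  · simp [Finset.sum_apply, splitMat]

variable {A}

theorem MatIndep.splitMat {D : Set E} (h : MatIndep p A D) : MatIndep p (splitMat p A T) D := by
  have hrestrict :
      LinearMap.funLeft (ZMod p) (ZMod p) Fin.castSucc ∘ _root_.splitMat p A T = A := by
    funext x i
    simp [LinearMap.funLeft_apply, _root_.splitMat]
  rw [matIndep_iff_linearIndepOn, ← hrestrict] at h
  exact h.of_comp _

theorem MatCircuit.splitMat_iff [Fact p.Prime] [DecidablePred (· ∈ T)] {C : Finset E}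
    (hC : MatCircuit p A C) :
    MatCircuit p (splitMat p A T) C ↔
      ∃ α : E → ZMod p, (∀ x ∈ C, α x ≠ 0) ∧ (∑ x ∈ C, α x • A x = 0) ∧
        ∑ x ∈ C.filter (· ∈ T), α x = 0 := by
  have hcirc : MatCircuit p (splitMat p A T) C ↔ ¬ MatIndep p (splitMat p A T) C :=
    ⟨And.left, fun h => ⟨h, fun D hD => (hC.2 D hD).splitMat T⟩⟩
  rw [hcirc, matIndep_iff_linearIndepOn, not_linearIndepOn_finset_iff]
  simp only [splitMat_sum, Fin.snoc_eq_zero_iff]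
  constructor
  · rintro ⟨α, ⟨hαA, hαT⟩, hne⟩
    exact ⟨α, forall_ne_zero_of_dependence hC.2 hαA hne, hαA, hαT⟩
  · rintro ⟨α, hα, hαA, hαT⟩
    obtain ⟨x, hx⟩ := hC.nonempty
    exact ⟨α, ⟨hαA, hαT⟩, x, hx, hα x hx⟩

end SplitMatrix

theorem circuit_split_iff_coeff_sum_general {p n : ℕ} [Fact p.Prime] {E : Type}
    (A : E → (Fin n → ZMod p)) (T : Set E) [DecidablePred (· ∈ T)]
    (C : Finset E) (hC : MatCircuit p A (↑C : Set E)) :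
    (MatCircuit p (splitMat p A T) (↑C : Set E) ↔
      ∀ α : E → ZMod p, (∀ x ∈ C, α x ≠ 0) → (∑ x ∈ C, α x • A x = 0) →
        ∑ x ∈ C.filter (· ∈ T), α x = 0) ∧
    (MatCircuit p (splitMat p A T) (↑C : Set E) ↔
      ∃ α : E → ZMod p, (∀ x ∈ C, α x ≠ 0) ∧ (∑ x ∈ C, α x • A x = 0) ∧
        ∑ x ∈ C.filter (· ∈ T), α x = 0) := by
  have hsplit := hC.splitMat_iff T
  refine ⟨hsplit.trans ⟨?_, fun h => ?_⟩, hsplit⟩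
  · rintro ⟨α, hα, hαA, hαT⟩ β _ hβA
    obtain ⟨c, hc⟩ := exists_eq_mul_of_dependence hC.2 hα hαA hβA
    rw [Finset.sum_congr rfl fun x hx => hc x (Finset.mem_filter.1 hx).1, ← Finset.mul_sum,
      hαT, mul_zero]
  · obtain ⟨α, hα, hαA⟩ := exists_dependence_forall_ne_zero hC.1 hC.2
    exact ⟨α, hα, hαA, h α hα hαA⟩

theorem circuit_split_iff_coeff_sum {p n : ℕ} [Fact p.Prime] {E : Type}
    (A : E → (Fin n → ZMod p)) (T : Set E) [DecidablePred (· ∈ T)]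
    (C : Finset E) (hC : MatCircuit p A (↑C : Set E)) (hCT : ((↑C : Set E) ∩ T).Nonempty) :
    (MatCircuit p (splitMat p A T) (↑C : Set E) ↔
      ∀ α : E → ZMod p, (∀ x ∈ C, α x ≠ 0) → (∑ x ∈ C, α x • A x = 0) →
        ∑ x ∈ C.filter (· ∈ T), α x = 0) ∧
    (MatCircuit p (splitMat p A T) (↑C : Set E) ↔
      ∃ α : E → ZMod p, (∀ x ∈ C, α x ≠ 0) ∧ (∑ x ∈ C, α x • A x = 0) ∧
        ∑ x ∈ C.filter (· ∈ T), α x = 0) :=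
  circuit_split_iff_coeff_sum_general A T C hC
end

section
/- Let M = M[A] over GF(p), T ⊆ E, M_T = M[A_T]. If C₁ and C₂ are disjoint NPT-circuits of M (circuits of M that are not circuits of M_T, each meeting T), then C₁ ∪ C₂ is a dependent set in M_T. -/
open Set

lemma lc_splitMat {p n : ℕ} {E : Type} (A : E → (Fin n → ZMod p)) (T : Set E)
    (l : E →₀ ZMod p) :
    Finsupp.linearCombination (ZMod p) (splitMat p A T) l =
      Fin.snoc (Finsupp.linearCombination (ZMod p) A l)
        (l.sum fun e c => c * T.indicator (fun _ => (1 : ZMod p)) e) := by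
  classical
  funext j
  refine Fin.lastCases ?_ ?_ j
  · simp [Finsupp.linearCombination_apply, Finsupp.sum, Finset.sum_apply, splitMat]
  · intro i
    simp [Finsupp.linearCombination_apply, Finsupp.sum, Finset.sum_apply, splitMat]

lemma matIndep_iff {p n : ℕ} {E : Type} (A : E → (Fin n → ZMod p)) (S : Set E) :
    MatIndep p A S ↔ ∀ l ∈ Finsupp.supported (ZMod p) (ZMod p) S,
      Finsupp.linearCombination (ZMod p) A l = 0 → l = 0 :=
  linearIndepOn_iff

lemma snoc_zero_zero {p n : ℕ} :
    (Fin.snoc (0 : Fin n → ZMod p) (0 : ZMod p) : Fin (n+1) → ZMod p) = 0 := by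
  funext j
  refine Fin.lastCases ?_ ?_ j <;> simp

theorem disjoint_NPT_union_dep {p n : ℕ} [Fact p.Prime] {E : Type}
    (A : E → (Fin n → ZMod p)) (T : Set E) (C₁ C₂ : Set E)
    (h₁ : NPTCircuit p A T C₁) (h₂ : NPTCircuit p A T C₂) (hd : Disjoint C₁ C₂) :
    ¬ MatIndep p (splitMat p A T) (C₁ ∪ C₂) := by
  classical
  obtain ⟨⟨hc₁, -⟩, -, hi₁⟩ := h₁
  obtain ⟨⟨hc₂, -⟩, -, hi₂⟩ := h₂
  rw [matIndep_iff] at hc₁ hc₂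
  push_neg at hc₁ hc₂
  obtain ⟨l₁, hs₁, hz₁, hne₁⟩ := hc₁
  obtain ⟨l₂, hs₂, hz₂, hne₂⟩ := hc₂
  set t₁ : ZMod p := l₁.sum fun e c => c * T.indicator (fun _ => (1 : ZMod p)) e with ht₁def
  set t₂ : ZMod p := l₂.sum fun e c => c * T.indicator (fun _ => (1 : ZMod p)) e with ht₂def
  have ht₁ : t₁ ≠ 0 := by
    intro h0
    refine hne₁ ((matIndep_iff _ _).mp hi₁ l₁ hs₁ ?_)
    rw [lc_splitMat, hz₁, ← ht₁def, h0, snoc_zero_zero]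
  have ht₂ : t₂ ≠ 0 := by
    intro h0
    refine hne₂ ((matIndep_iff _ _).mp hi₂ l₂ hs₂ ?_)
    rw [lc_splitMat, hz₂, ← ht₂def, h0, snoc_zero_zero]
  rw [matIndep_iff]
  push_neg
  refine ⟨t₂ • l₁ - t₁ • l₂, ?_, ?_, ?_⟩
  · have m₁ : l₁ ∈ Finsupp.supported (ZMod p) (ZMod p) (C₁ ∪ C₂) :=
      Finsupp.supported_mono Set.subset_union_left hs₁
    have m₂ : l₂ ∈ Finsupp.supported (ZMod p) (ZMod p) (C₁ ∪ C₂) :=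
      Finsupp.supported_mono Set.subset_union_right hs₂
    exact sub_mem (Submodule.smul_mem _ _ m₁) (Submodule.smul_mem _ _ m₂)
  · rw [map_sub, map_smul, map_smul, lc_splitMat, lc_splitMat, hz₁, hz₂, ← ht₁def, ← ht₂def]
    funext j
    refine Fin.lastCases ?_ ?_ j
    · simp [mul_comm]
    · intro i; simp
  · intro h0
    obtain ⟨e, he⟩ : ∃ e, l₁ e ≠ 0 := by
      by_contra h
      push_neg at h
      exact hne₁ (Finsupp.ext h)
    have heC₁ : e ∈ C₁ := hs₁ (Finsupp.mem_support_iff.mpr he)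
    have heC₂ : e ∉ C₂ := fun h' => (hd.ne_of_mem heC₁ h') rfl
    have hl₂e : l₂ e = 0 := by
      by_contra h'
      exact heC₂ (hs₂ (Finsupp.mem_support_iff.mpr h'))
    have := congrFun (congrArg (fun f : E →₀ ZMod p => (f : E → ZMod p)) h0) e
    simp [hl₂e] at this
    rcases this with h | h
    · exact ht₂ h
    · exact he h
end

section
/- Let M = M[A] over GF(p), T ⊆ E, M_T = M[A_T], and M'_T = M[A'_T] the element splitting matroid with new element z. If C is an NPT-circuit of M (a circuit of M meeting T that is independent in M_T), then C ∪ {z} is a circuit of M'_T. -/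
open Set

section AuxNPT

variable {p n : ℕ} {E : Type} (A : E → (Fin n → ZMod p)) (T : Set E)

lemma elSplit_key (l : Option E →₀ ZMod p) :
    Finsupp.linearCombination (ZMod p) (elSplitMat p A T) l
      = l none • (Fin.snoc 0 1 : Fin (n + 1) → ZMod p)
        + Finsupp.linearCombination (ZMod p) (splitMat p A T) l.some := by
  rw [Finsupp.linearCombination_apply, Finsupp.sum_option_index_smul,
    Finsupp.linearCombination_apply]
  rfl

lemma splitMat_castSucc_comb (l : E →₀ ZMod p) (i : Fin n) :
    Finsupp.linearCombination (ZMod p) (splitMat p A T) l (i.castSucc)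
      = Finsupp.linearCombination (ZMod p) A l i := by
  simp only [Finsupp.linearCombination_apply, Finsupp.sum, Finset.sum_apply, Pi.smul_apply,
    splitMat, Fin.snoc_castSucc]

lemma matIndep_mono {p : ℕ} {E : Type} {n : ℕ} {A : E → Fin n → ZMod p} {S S' : Set E}
    (h : MatIndep p A S') (hsub : S ⊆ S') : MatIndep p A S :=
  h.comp (Set.inclusion hsub) (Set.inclusion_injective hsub)

lemma some_supported {l : Option E →₀ ZMod p} {C' : Set E}
    (hl : l ∈ Finsupp.supported (ZMod p) (ZMod p) (insert none (Option.some '' C'))) :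
    l.some ∈ Finsupp.supported (ZMod p) (ZMod p) C' := by
  intro e he
  have : Option.some e ∈ insert none (Option.some '' C') := hl (by simpa using he)
  rcases this with h | ⟨e', he', heq⟩
  · exact absurd h (by simp)
  · rwa [Option.some_injective E heq] at he'

/-- If `C'` is independent in `A`, then `{z} ∪ C'` is independent in `A'_T`. -/
lemma elSplit_insert_indep {C' : Set E} (hC' : MatIndep p A C') :
    MatIndep p (elSplitMat p A T) (insert none (Option.some '' C')) := by
  have hiff := linearIndepOn_iff
    (R := ZMod p) (v := elSplitMat p A T) (s := insert none (Option.some '' C'))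
  refine (show _ from hiff.mpr ?_)
  intro l hl hl0
  rw [elSplit_key] at hl0
  -- first, the `A`-part vanishes
  have hA0 : Finsupp.linearCombination (ZMod p) A l.some = 0 := by
    ext i
    have := congrFun hl0 i.castSucc
    simpa [Fin.snoc_castSucc, splitMat_castSucc_comb] using this
  have hC'' : LinearIndependent (ZMod p) ((A ∘ Subtype.val) : C' → Fin n → ZMod p) := hC'
  have hsome0 : l.some = 0 :=
    (linearIndepOn_iff.mp hC'') l.some (some_supported hl) hA0
  have hnone0 : l none = 0 := by
    have := congrFun hl0 (Fin.last n)
    simpa [hsome0, Fin.snoc_last] using this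
  ext o
  cases o with
  | none => simpa using hnone0
  | some a => simpa using DFunLike.congr_fun hsome0 a

/-- If `C` is independent in `A_T`, then (the copy of) `C` is independent in `A'_T`. -/
lemma elSplit_image_indep {C : Set E} (hCw : MatIndep p (splitMat p A T) C) :
    MatIndep p (elSplitMat p A T) (Option.some '' C) := by
  have hiff := linearIndepOn_iff
    (R := ZMod p) (v := elSplitMat p A T) (s := Option.some '' C)
  refine (show _ from hiff.mpr ?_)
  intro l hl hl0
  have hnone0 : l none = 0 := by
    by_contra h
    have : (none : Option E) ∈ Option.some '' C := hl (Finsupp.mem_support_iff.mpr h)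
    simp at this
  rw [elSplit_key, hnone0, zero_smul, zero_add] at hl0
  have hsupp : l.some ∈ Finsupp.supported (ZMod p) (ZMod p) C := by
    intro e he
    have : Option.some e ∈ Option.some '' C := hl (by simpa using he)
    rcases this with ⟨e', he', heq⟩
    rwa [Option.some_injective E heq] at he'
  have hCw' : LinearIndependent (ZMod p)
      ((splitMat p A T ∘ Subtype.val) : C → Fin (n + 1) → ZMod p) := hCw
  have hsome0 : l.some = 0 :=
    (linearIndepOn_iff.mp hCw') l.some hsupp hl0
  ext o
  cases o with
  | none => simpa using hnone0
  | some a => simpa using DFunLike.congr_fun hsome0 a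

end AuxNPT

theorem NPT_insert_z_circuit_elSplit {p n : ℕ} [Fact p.Prime] {E : Type}
    (A : E → (Fin n → ZMod p)) (T : Set E) (C : Set E)
    (hC : NPTCircuit p A T C) :
    MatCircuit p (elSplitMat p A T) (insert none (Option.some '' C)) := by
  obtain ⟨⟨hdep, hmin⟩, _hmeet, hindw⟩ := hC
  constructor
  · -- dependence
    have hdep' : ¬ LinearIndepOn (ZMod p) A C := hdep
    rw [linearIndepOn_iff] at hdep'
    push_neg at hdep'
    obtain ⟨l, hlsupp, hl0, hlne⟩ := hdep'
    set t : ZMod p := Finsupp.linearCombination (ZMod p) (splitMat p A T) l (Fin.last n) with ht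
    set L : Option E →₀ ZMod p :=
      Finsupp.mapDomain Option.some l + Finsupp.single none (-t) with hL
    have hLsome : ∀ e : E, L (Option.some e) = l e := by
      intro e
      simp [hL, Finsupp.mapDomain_apply (Option.some_injective E),
        Finsupp.single_apply]
    have hLsupp : L ∈ Finsupp.supported (ZMod p) (ZMod p) (insert none (Option.some '' C)) := by
      intro o ho
      cases o with
      | none => exact Set.mem_insert _ _
      | some a =>
        refine Set.mem_insert_of_mem _ ⟨a, ?_, rfl⟩
        have ha : l a ≠ 0 := by
          have := Finsupp.mem_support_iff.mp ho
          rwa [hLsome] at this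
        exact hlsupp (Finsupp.mem_support_iff.mpr ha)
    have hLsome' : L.some = l := by
      ext e; simpa using hLsome e
    have hLnone : L none = -t := by
      simp [hL, Finsupp.mapDomain_notin_range]
    have hLcomb : Finsupp.linearCombination (ZMod p) (elSplitMat p A T) L = 0 := by
      rw [elSplit_key, hLsome', hLnone]
      ext i
      refine Fin.lastCases ?_ ?_ i
      · simp [Fin.snoc_last, ← ht]
      · intro j
        have : Finsupp.linearCombination (ZMod p) (splitMat p A T) l j.castSucc = 0 := by
          rw [splitMat_castSucc_comb, hl0]; rfl
        simp [Fin.snoc_castSucc, this]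
    have hLne : L ≠ 0 := by
      intro h
      obtain ⟨e, he⟩ : ∃ e, l e ≠ 0 := by
        by_contra hc
        push_neg at hc
        exact hlne (Finsupp.ext hc)
      apply he
      rw [← hLsome e, h]; rfl
    intro hind
    have hind' : LinearIndependent (ZMod p)
        ((elSplitMat p A T ∘ Subtype.val) :
          (insert none (Option.some '' C) : Set (Option E)) → Fin (n + 1) → ZMod p) := hind
    exact hLne (linearIndepOn_iff.mp hind' L hLsupp hLcomb)
  · -- minimality
    intro D hD
    by_cases hnone : none ∈ D
    · set C' : Set E := {e | Option.some e ∈ D} with hC'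
      have hsubC : C' ⊆ C := by
        intro e he
        have : Option.some e ∈ insert none (Option.some '' C) := hD.1 he
        rcases this with h | ⟨e', he', heq⟩
        · exact absurd h (by simp)
        · rwa [Option.some_injective E heq] at he'
      have hne : C' ≠ C := by
        intro h
        apply hD.2
        intro o ho
        cases o with
        | none => exact hnone
        | some a =>
          rcases ho with h' | ⟨a', ha', heq⟩
          · exact absurd h' (by simp)
          · have : a' ∈ C' := h ▸ ha'
            rwa [← heq]
      have hCA : MatIndep p A C' := hmin C' ⟨hsubC, fun h => hne (Set.Subset.antisymm hsubC h)⟩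
      have hbig := elSplit_insert_indep A T hCA
      refine matIndep_mono hbig ?_
      intro o ho
      cases o with
      | none => exact Set.mem_insert _ _
      | some a => exact Set.mem_insert_of_mem _ ⟨a, ho, rfl⟩
    · have hbig := elSplit_image_indep A T hindw
      refine matIndep_mono hbig ?_
      intro o ho
      cases o with
      | none => exact absurd ho hnone
      | some a =>
        have : Option.some a ∈ insert none (Option.some '' C) := hD.1 ho
        rcases this with h | ⟨a', ha', heq⟩
        · exact absurd h (by simp)
        · exact ⟨a', ha', heq⟩
end

section
/- Let M = M[A] over GF(p), T ⊆ E, M'_T = M[A'_T] the element splitting matroid with new element z. A set B ∪ {z} with B ⊆ E is a basis of M'_T if and only if B is a basis of M. -/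
open Set

lemma key {p n : ℕ} [Fact p.Prime] {E : Type} (A : E → (Fin n → ZMod p)) (T S : Set E) :
    (LinearIndependent (ZMod p) (fun x : S => splitMat p A T x.1) ∧
      (Fin.snoc (0 : Fin n → ZMod p) 1 : Fin (n+1) → ZMod p) ∉
        Submodule.span (ZMod p) (splitMat p A T '' S)) ↔
    LinearIndependent (ZMod p) (fun x : S => A x.1) := by
  set π : (Fin (n+1) → ZMod p) →ₗ[ZMod p] (Fin n → ZMod p) :=
    LinearMap.funLeft (ZMod p) (ZMod p) (Fin.castSucc) with hπdef
  have hπ : ∀ e, π (splitMat p A T e) = A e := by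
    intro e; funext i
    simp [hπdef, LinearMap.funLeft, splitMat, Fin.snoc_castSucc]
  have hπz : π (Fin.snoc (0 : Fin n → ZMod p) 1) = 0 := by
    funext i; simp [hπdef, LinearMap.funLeft, Fin.snoc_castSucc]
  have hcomp : (⇑π ∘ fun x : S => splitMat p A T x.1) = fun x : S => A x.1 :=
    funext fun x => hπ x.1
  constructor
  · rintro ⟨h1, h2⟩
    rw [linearIndependent_iff]
    intro l hl
    set y := Finsupp.linearCombination (ZMod p) (fun x : S => splitMat p A T x.1) l with hy
    have hπy : π y = 0 := by
      rw [hy, Finsupp.apply_linearCombination, hcomp]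
      exact hl
    have hyz : y = y (Fin.last n) • (Fin.snoc (0 : Fin n → ZMod p) 1 : Fin (n+1) → ZMod p) := by
      funext j
      refine Fin.lastCases ?_ ?_ j
      · simp [Fin.snoc_last]
      · intro i
        have := congrFun hπy i
        simp only [hπdef, LinearMap.funLeft_apply] at this
        simp [Fin.snoc_castSucc, this]
    have hymem : y ∈ Submodule.span (ZMod p) (splitMat p A T '' S) := by
      rw [Set.image_eq_range]
      rw [hy, Finsupp.linearCombination_apply]
      exact Submodule.sum_mem _ fun i _ => Submodule.smul_mem _ _ (Submodule.subset_span ⟨i, rfl⟩)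
    have hlast : y (Fin.last n) = 0 := by
      by_contra h
      apply h2
      have : Fin.snoc (0 : Fin n → ZMod p) 1 = (y (Fin.last n))⁻¹ • y := by
        nth_rewrite 2 [hyz]
        rw [smul_smul, inv_mul_cancel₀ h, one_smul]
      rw [this]
      exact Submodule.smul_mem _ _ hymem
    have : y = 0 := by rw [hyz, hlast, zero_smul]
    exact linearIndependent_iff.mp h1 l this
  · intro hA
    constructor
    · refine LinearIndependent.of_comp π ?_
      rw [hcomp]; exact hA
    · intro hz
      rw [Set.image_eq_range] at hz
      obtain ⟨c, hc⟩ := Finsupp.mem_span_range_iff_exists_finsupp.mp hz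
      have hc' : Finsupp.linearCombination (ZMod p)
          (fun x : S => splitMat p A T x.1) c = Fin.snoc (0 : Fin n → ZMod p) 1 := by
        rw [Finsupp.linearCombination_apply]; exact hc
      have : Finsupp.linearCombination (ZMod p) (fun x : S => A x.1) c = 0 := by
        have := congrArg π hc'
        rw [Finsupp.apply_linearCombination] at this
        rw [hπz, hcomp] at this
        exact this
      have hc0 : c = 0 := linearIndependent_iff.mp hA c this
      rw [hc0, map_zero] at hc'
      have := congrFun hc' (Fin.last n)
      simp [Fin.snoc_last] at this


lemma indep_elSplit_iff {p n : ℕ} [Fact p.Prime] {E : Type}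
    (A : E → (Fin n → ZMod p)) (T : Set E) (S : Set E) :
    MatIndep p (elSplitMat p A T) (insert none (Option.some '' S)) ↔ MatIndep p A S := by
  unfold MatIndep
  refine (linearIndepOn_insert (show (none : Option E) ∉ Option.some '' S by simp)).trans ?_; unfold LinearIndepOn
  have himg : elSplitMat p A T '' (Option.some '' S) = splitMat p A T '' S := by
    rw [Set.image_image]; rfl
  have hequiv : (LinearIndependent (ZMod p)
        (fun x : ↥(Option.some '' S) => elSplitMat p A T x.1)) ↔
      LinearIndependent (ZMod p) (fun x : S => splitMat p A T x.1) := by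
    exact (linearIndependent_equiv'
      (f := fun x : ↥(Option.some '' S) => elSplitMat p A T x.1)
      (g := fun x : S => splitMat p A T x.1)
      (Equiv.Set.image Option.some S (Option.some_injective E)) (funext fun x => rfl)).symm
  rw [hequiv, himg]
  exact key A T S

theorem basis_elSplit_iff {p n : ℕ} [Fact p.Prime] {E : Type}
    (A : E → (Fin n → ZMod p)) (T : Set E) (B : Set E) :
    MatBasis p (elSplitMat p A T) (insert none (Option.some '' B)) ↔ MatBasis p A B := by
  constructor
  · rintro ⟨hi, hmax⟩
    refine ⟨(indep_elSplit_iff A T B).mp hi, fun S hS hBS => ?_⟩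
    have hS' := (indep_elSplit_iff A T S).mpr hS
    have heq := hmax _ hS' (insert_subset_insert (Set.image_mono hBS))
    ext x
    constructor
    · intro hx
      have hx' : (some x : Option E) ∈ insert none (Option.some '' B) := by
        rw [← heq]; exact Set.mem_insert_of_mem _ ⟨x, hx, rfl⟩
      rcases hx' with h | ⟨y, hy, he⟩
      · exact absurd h (by simp)
      · rwa [← Option.some_injective E he]
    · exact fun hx => hBS hx
  · rintro ⟨hi, hmax⟩
    refine ⟨(indep_elSplit_iff A T B).mpr hi, fun S hS hsub => ?_⟩
    have hnone : (none : Option E) ∈ S := hsub (Set.mem_insert _ _)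
    have hSeq : S = insert none (Option.some '' (Option.some ⁻¹' S)) := by
      ext x
      cases x with
      | none => simp [hnone]
      | some e => simp [Set.mem_preimage]
    rw [hSeq] at hS
    have hind := (indep_elSplit_iff A T (Option.some ⁻¹' S)).mp hS
    have hBsub : B ⊆ Option.some ⁻¹' S := fun b hb =>
      hsub (Set.mem_insert_of_mem _ ⟨b, hb, rfl⟩)
    have := hmax _ hind hBsub
    rw [hSeq, this]
end

section
/- Let M = M[A] over GF(p), T ⊆ E, M_T = M[A_T]. If M contains an NPT-circuit (a circuit meeting T that is independent in M_T), then the rank of M_T equals the rank of M plus one, and every basis of M_T has the form B ∪ {x} for some basis B of M and some x ∈ E \ B. -/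
open Set

section AuxProofs

open Submodule Module

set_option linter.unusedSectionVars false

variable {p n : ℕ} [Fact p.Prime] {E : Type} [Fintype E]

private lemma sum_smul_splitMat (A : E → (Fin n → ZMod p)) (T : Set E) (g : E → ZMod p) :
    ∑ e, g e • splitMat p A T e =
      Fin.snoc (∑ e, g e • A e) (∑ e, g e * T.indicator (fun _ => 1) e) := by
  funext j
  refine Fin.lastCases ?_ ?_ j
  · rw [Fin.snoc_last, Finset.sum_apply]
    refine Finset.sum_congr rfl fun e _ => ?_
    simp [splitMat]
  · intro i
    rw [Fin.snoc_castSucc, Finset.sum_apply, Finset.sum_apply]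
    refine Finset.sum_congr rfl fun e _ => ?_
    simp [splitMat]

private lemma sum_support_subtype {m : ℕ} (A : E → (Fin m → ZMod p)) (S : Set E) [Fintype S]
    (g : E → ZMod p) (hg : ∀ e, e ∉ S → g e = 0) :
    ∑ i : S, g i.1 • A i.1 = ∑ e, g e • A e := by
  classical
  rw [← Finset.sum_subtype S.toFinset (fun x => Set.mem_toFinset) (fun e => g e • A e)]
  refine Finset.sum_subset (Finset.subset_univ _) fun e _ he => ?_
  rw [hg e (by simpa using he), zero_smul]

private lemma not_matIndep_iff' {m : ℕ} (A : E → (Fin m → ZMod p)) (S : Set E) :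
    ¬ MatIndep p A S ↔ ∃ g : E → ZMod p,
      (∀ e, e ∉ S → g e = 0) ∧ (∑ e, g e • A e) = 0 ∧ ∃ e, g e ≠ 0 := by
  classical
  haveI : Fintype S := Fintype.ofFinite _
  constructor
  · intro hni
    rw [MatIndep, Fintype.not_linearIndependent_iff] at hni
    obtain ⟨g, hsum, i, hi⟩ := hni
    refine ⟨fun e => if h : e ∈ S then g ⟨e, h⟩ else 0, fun e he => dif_neg he, ?_, ⟨i.1, ?_⟩⟩
    · rw [← sum_support_subtype A S _ (fun e he => dif_neg he), ← hsum]
      refine Finset.sum_congr rfl fun j _ => ?_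
      show (if h : (j : E) ∈ S then g ⟨(j : E), h⟩ else 0) • A (j : E) = g j • A (j : E)
      rw [dif_pos j.2]
    · show (if h : (i : E) ∈ S then g ⟨(i : E), h⟩ else 0) ≠ 0
      rw [dif_pos i.2]
      exact hi
  · rintro ⟨g, hsupp, hsum, e, he⟩
    have heS : e ∈ S := by by_contra hc; exact he (hsupp e hc)
    rw [MatIndep, Fintype.not_linearIndependent_iff]
    refine ⟨fun i => g i.1, ?_, ⟨⟨e, heS⟩, he⟩⟩
    rw [sum_support_subtype A S g hsupp]
    exact hsum

private lemma matIndep_zero_of_combo {m : ℕ} {A : E → (Fin m → ZMod p)} {S : Set E}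
    (hind : MatIndep p A S) (g : E → ZMod p) (hg : ∀ e, e ∉ S → g e = 0)
    (hsum : ∑ e, g e • A e = 0) : ∀ e, g e = 0 := by
  by_contra hc
  push_neg at hc
  exact (not_matIndep_iff' A S).mpr ⟨g, hg, hsum, hc⟩ hind

private lemma matIndep_ncard {m : ℕ} {A : E → (Fin m → ZMod p)} {S : Set E}
    (h : MatIndep p A S) : S.ncard = matRank p A S := by
  classical
  haveI : Fintype S := Fintype.ofFinite _
  have h2 := linearIndependent_iff_card_eq_finrank_span.mp h
  rw [Set.finrank, ← Set.image_eq_range] at h2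
  rw [Set.ncard_eq_toFinset_card', Set.toFinset_card]
  exact h2

private lemma matBasis_iff_span {m : ℕ} (A : E → (Fin m → ZMod p)) (B : Set E) :
    MatBasis p A B ↔ MatIndep p A B ∧
      span (ZMod p) (A '' B) = span (ZMod p) (A '' Set.univ) := by
  constructor
  · rintro ⟨hind, hmax⟩
    refine ⟨hind, ?_⟩
    refine le_antisymm (span_mono (Set.image_mono (Set.subset_univ _))) ?_
    rw [span_le]
    rintro v ⟨e, -, rfl⟩
    by_contra hv
    have heB : e ∉ B := fun hc => hv (subset_span ⟨e, hc, rfl⟩)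
    have hinj : Set.InjOn A B := by
      intro a ha b hb hab
      have := hind.injective (a₁ := ⟨a, ha⟩) (a₂ := ⟨b, hb⟩) hab
      exact Subtype.ext_iff.mp this
    have hsetind : LinearIndependent (ZMod p) (fun x : (A '' B) => (x : Fin m → ZMod p)) :=
      (linearIndepOn_iff_image hinj).mp hind
    have hins : LinearIndependent (ZMod p)
        (fun x : (insert (A e) (A '' B) : Set (Fin m → ZMod p)) => (x : Fin m → ZMod p)) :=
      LinearIndepOn.id_insert hsetind hv
    have hinj' : Set.InjOn A (insert e B) := by
      intro a ha b hb hab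
      rcases ha with rfl | ha <;> rcases hb with rfl | hb
      · rfl
      · exact absurd (subset_span (hab ▸ Set.mem_image_of_mem A hb)) hv
      · exact absurd (subset_span (hab ▸ Set.mem_image_of_mem A ha)) hv
      · exact hinj ha hb hab
    have hIns : MatIndep p A (insert e B) := by
      rw [MatIndep]
      refine (linearIndepOn_iff_image hinj').mpr ?_
      rw [Set.image_insert_eq]
      exact hins
    have hEq := hmax _ hIns (Set.subset_insert _ _)
    exact heB (hEq ▸ Set.mem_insert e B)
  · rintro ⟨hind, hspan⟩
    refine ⟨hind, ?_⟩
    intro S hS hBS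
    refine Set.Subset.antisymm ?_ hBS
    intro e heS
    by_contra heB
    have hnot : (⟨e, heS⟩ : S) ∉ {x : S | x.1 ∈ B} := heB
    have h2 := hS.notMem_span_image hnot
    have him : (fun x : S => A x.1) '' {x : S | x.1 ∈ B} = A '' B := by
      ext v
      constructor
      · rintro ⟨x, hx, rfl⟩; exact ⟨x.1, hx, rfl⟩
      · rintro ⟨a, ha, rfl⟩; exact ⟨⟨a, hBS ha⟩, ha, rfl⟩
    rw [him] at h2
    exact h2 (hspan ▸ subset_span ⟨e, Set.mem_univ e, rfl⟩)

private lemma matBasis_of_ncard {m : ℕ} {A : E → (Fin m → ZMod p)} {B : Set E}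
    (hind : MatIndep p A B) (hcard : B.ncard = matRank p A Set.univ) : MatBasis p A B := by
  rw [matBasis_iff_span]
  refine ⟨hind, ?_⟩
  refine Submodule.eq_of_le_of_finrank_le
    (span_mono (Set.image_mono (Set.subset_univ _))) (le_of_eq ?_)
  have h1 : B.ncard = matRank p A B := matIndep_ncard hind
  show matRank p A Set.univ = matRank p A B
  omega

private lemma snoc_mem (A : E → (Fin n → ZMod p)) (T : Set E)
    (h : ∃ C : Set E, NPTCircuit p A T C) :
    (Fin.snoc (0 : Fin n → ZMod p) 1) ∈ span (ZMod p) (splitMat p A T '' Set.univ) := by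
  obtain ⟨C, ⟨hdep, -⟩, -, hindT⟩ := h
  obtain ⟨g, hg0, hsum, e0, he0⟩ := (not_matIndep_iff' A C).mp hdep
  set t : ZMod p := ∑ e, g e * T.indicator (fun _ => 1) e with ht
  have hs : ∑ e, g e • splitMat p A T e = (Fin.snoc (0 : Fin n → ZMod p) t : Fin (n + 1) → ZMod p) := by
    rw [sum_smul_splitMat, hsum]
  have htne : t ≠ 0 := by
    intro h0
    have hz : ∑ e, g e • splitMat p A T e = 0 := by
      rw [hs, h0]
      funext j
      refine Fin.lastCases ?_ ?_ j
      · simp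
      · intro i; simp
    exact he0 (matIndep_zero_of_combo hindT g hg0 hz e0)
  have hmem : (Fin.snoc (0 : Fin n → ZMod p) t : Fin (n + 1) → ZMod p) ∈ span (ZMod p) (splitMat p A T '' Set.univ) := by
    rw [← hs]
    exact Submodule.sum_mem _ fun e _ =>
      Submodule.smul_mem _ _ (subset_span ⟨e, Set.mem_univ e, rfl⟩)
  have heq : (Fin.snoc (0 : Fin n → ZMod p) 1 : Fin (n + 1) → ZMod p) = t⁻¹ • (Fin.snoc (0 : Fin n → ZMod p) t : Fin (n + 1) → ZMod p) := by
    funext j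
    refine Fin.lastCases ?_ ?_ j
    · simp [inv_mul_cancel₀ htne]
    · intro i; simp
  rw [heq]
  exact Submodule.smul_mem _ _ hmem

private lemma rank_split (A : E → (Fin n → ZMod p)) (T : Set E)
    (h : ∃ C : Set E, NPTCircuit p A T C) :
    matRank p (splitMat p A T) Set.univ = matRank p A Set.univ + 1 := by
  classical
  set W' : Submodule (ZMod p) (Fin (n + 1) → ZMod p) :=
    span (ZMod p) (splitMat p A T '' Set.univ) with hW'
  set L : (Fin (n + 1) → ZMod p) →ₗ[ZMod p] (Fin n → ZMod p) :=
    LinearMap.funLeft (ZMod p) (ZMod p) Fin.castSucc with hL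
  set f : W' →ₗ[ZMod p] (Fin n → ZMod p) := L.comp W'.subtype with hf
  have hLA : ∀ e, L (splitMat p A T e) = A e := by
    intro e; funext i
    simp [hL, LinearMap.funLeft_apply, splitMat]
  have hrange : LinearMap.range f = span (ZMod p) (A '' Set.univ) := by
    rw [hf, LinearMap.range_comp, Submodule.range_subtype, hW', Submodule.map_span,
      Set.image_image]
    congr 1
    exact Set.image_congr fun e _ => hLA e
  set z : W' := ⟨(Fin.snoc (0 : Fin n → ZMod p) 1 : Fin (n + 1) → ZMod p), snoc_mem A T h⟩ with hz
  have hzne : z ≠ 0 := by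
    intro h0
    have h1 := congrFun (congrArg Subtype.val h0) (Fin.last n)
    rw [hz] at h1
    simp at h1
  have hker : LinearMap.ker f = span (ZMod p) {z} := by
    apply le_antisymm
    · rintro ⟨v, hv⟩ hvk
      have h0 : ∀ i : Fin n, v (Fin.castSucc i) = 0 :=
        fun i => congrFun (LinearMap.mem_ker.mp hvk) i
      rw [Submodule.mem_span_singleton]
      refine ⟨v (Fin.last n), ?_⟩
      apply Subtype.ext
      show v (Fin.last n) • (Fin.snoc (0 : Fin n → ZMod p) 1 : Fin (n + 1) → ZMod p) = v
      funext j
      refine Fin.lastCases ?_ ?_ j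
      · simp
      · intro i; simp [h0 i]
    · rw [span_le, Set.singleton_subset_iff, SetLike.mem_coe, LinearMap.mem_ker]
      show L (Fin.snoc (0 : Fin n → ZMod p) 1 : Fin (n + 1) → ZMod p) = 0
      funext i
      simp [hL, LinearMap.funLeft_apply]
  have hfd := LinearMap.finrank_range_add_finrank_ker f
  rw [hrange, hker, finrank_span_singleton hzne] at hfd
  exact hfd.symm

end AuxProofs

theorem rank_split_and_bases {p n : ℕ} [Fact p.Prime] {E : Type} [Fintype E]
    (A : E → (Fin n → ZMod p)) (T : Set E)
    (h : ∃ C : Set E, NPTCircuit p A T C) :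
    matRank p (splitMat p A T) Set.univ = matRank p A Set.univ + 1 ∧
      ∀ B' : Set E, MatBasis p (splitMat p A T) B' →
        ∃ (B : Set E) (x : E), MatBasis p A B ∧ x ∉ B ∧ B' = insert x B := by
  classical
  have hrk := rank_split A T h
  refine ⟨hrk, ?_⟩
  intro B' hBasis'
  obtain ⟨hind', hspan'⟩ := (matBasis_iff_span (splitMat p A T) B').mp hBasis'
  have hcard' : B'.ncard = matRank p A Set.univ + 1 := by
    have hEq : matRank p (splitMat p A T) B' = matRank p (splitMat p A T) Set.univ := by
      unfold matRank
      rw [hspan']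
    rw [matIndep_ncard hind', hEq, hrk]
  have hdep : ¬ MatIndep p A B' := by
    intro hi
    have h1 : B'.ncard = matRank p A B' := matIndep_ncard hi
    have h2 : matRank p A B' ≤ matRank p A Set.univ :=
      Submodule.finrank_mono (Submodule.span_mono (Set.image_mono (Set.subset_univ _)))
    omega
  obtain ⟨g, hg0, hsum, x, hx⟩ := (not_matIndep_iff' A B').mp hdep
  have hxB' : x ∈ B' := by by_contra hc; exact hx (hg0 x hc)
  set t : ZMod p := ∑ e, g e * T.indicator (fun _ => 1) e with ht
  have hsg : ∑ e, g e • splitMat p A T e = (Fin.snoc (0 : Fin n → ZMod p) t : Fin (n + 1) → ZMod p) := by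
    rw [sum_smul_splitMat, hsum]
  have htne : t ≠ 0 := by
    intro h0
    have hz : ∑ e, g e • splitMat p A T e = 0 := by
      rw [hsg, h0]
      funext j
      refine Fin.lastCases ?_ ?_ j
      · simp
      · intro i; simp
    exact hx (matIndep_zero_of_combo hind' g hg0 hz x)
  set B : Set E := B' \ {x} with hB
  have hxnB : x ∉ B := fun hc => hc.2 rfl
  have hBeq : B' = insert x B := by
    rw [hB, Set.insert_diff_singleton, Set.insert_eq_of_mem hxB']
  have hindB : MatIndep p A B := by
    by_contra hc
    obtain ⟨k, hk0, hksum, e1, he1⟩ := (not_matIndep_iff' A B).mp hc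
    have hk0' : ∀ e, e ∉ B' → k e = 0 := fun e he => hk0 e (fun hc2 => he hc2.1)
    set s : ZMod p := ∑ e, k e * T.indicator (fun _ => 1) e with hs
    have hsk : ∑ e, k e • splitMat p A T e = (Fin.snoc (0 : Fin n → ZMod p) s : Fin (n + 1) → ZMod p) := by
      rw [sum_smul_splitMat, hksum]
    have hsne : s ≠ 0 := by
      intro h0
      have hz : ∑ e, k e • splitMat p A T e = 0 := by
        rw [hsk, h0]
        funext j
        refine Fin.lastCases ?_ ?_ j
        · simp
        · intro i; simp
      exact he1 (matIndep_zero_of_combo hind' k hk0' hz e1)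
    have hcombo : ∑ e, (s * g e - t * k e) • splitMat p A T e = 0 := by
      have hterm : ∀ e : E, (s * g e - t * k e) • splitMat p A T e
          = s • (g e • splitMat p A T e) - t • (k e • splitMat p A T e) := by
        intro e; rw [sub_smul, smul_smul, smul_smul]
      rw [Finset.sum_congr rfl (fun e _ => hterm e), Finset.sum_sub_distrib,
        ← Finset.smul_sum, ← Finset.smul_sum, hsg, hsk]
      funext j
      refine Fin.lastCases ?_ ?_ j
      · simp [mul_comm]
      · intro i; simp
    have hall := matIndep_zero_of_combo hind' (fun e => s * g e - t * k e)
      (fun e he => by show s * g e - t * k e = 0; rw [hg0 e he, hk0' e he, mul_zero, mul_zero, sub_zero]) hcombo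
    have hx0 : s * g x - t * k x = 0 := hall x
    rw [hk0 x hxnB, mul_zero, sub_zero] at hx0
    exact hsne ((mul_eq_zero.mp hx0).resolve_right hx)
  have hcardB : B.ncard = matRank p A Set.univ := by
    have h1 : B'.ncard = B.ncard + 1 := by
      rw [hBeq]
      exact Set.ncard_insert_of_notMem hxnB (Set.toFinite B)
    omega
  exact ⟨B, x, matBasis_of_ncard hindB hcardB, hxnB, hBeq⟩
end

section
/- Let M = M[A] over GF(p), T ⊆ E, M_T = M[A_T], and S ⊆ E. If S contains no NPT-circuit of M, then the rank of S in M_T equals the rank of S in M; if S contains an NPT-circuit of M, then the rank of S in M_T equals the rank of S in M plus one. -/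
open Set

namespace RankSplitAux

variable {p n : ℕ} [Fact p.Prime] {E : Type}

/-- Projection dropping the last coordinate. -/
noncomputable def prj (p n : ℕ) : ((Fin (n+1) → ZMod p) →ₗ[ZMod p] (Fin n → ZMod p)) :=
  LinearMap.funLeft _ _ Fin.castSucc

/-- The special vector with a `1` in the last coordinate and zeros elsewhere. -/
def zv (p n : ℕ) : Fin (n+1) → ZMod p := Fin.snoc 0 1

lemma prj_splitMat (A : E → (Fin n → ZMod p)) (T : Set E) :
    prj p n ∘ splitMat p A T = A := by
  funext e
  simp [prj, splitMat, LinearMap.funLeft_apply]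
  funext i
  simp [Fin.snoc_castSucc]

lemma prj_zv : prj p n (zv p n) = 0 := by
  funext i
  simp [prj, zv, LinearMap.funLeft_apply, Fin.snoc_castSucc]

lemma zv_last : zv p n (Fin.last n) = 1 := by simp [zv]

lemma zv_ne_zero : zv p n ≠ 0 := by
  intro h
  have := congrFun h (Fin.last n)
  rw [zv_last] at this
  exact one_ne_zero this

lemma eq_smul_zv {v : Fin (n+1) → ZMod p} (h : prj p n v = 0) :
    v = v (Fin.last n) • zv p n := by
  funext i
  refine Fin.lastCases ?_ ?_ i
  · simp [zv]
  · intro j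
    have : v (Fin.castSucc j) = 0 := congrFun h j
    simp [this, zv, Fin.snoc_castSucc]

lemma lc_prj (A : E → (Fin n → ZMod p)) (T : Set E) (l : E →₀ ZMod p) :
    prj p n (Finsupp.linearCombination (ZMod p) (splitMat p A T) l) =
      Finsupp.linearCombination (ZMod p) A l := by
  rw [Finsupp.apply_linearCombination, prj_splitMat]

/-- If `l` is a relation among the columns of `A`, then the `splitMat` combination is a
multiple of `zv`. -/
lemma lc_smul_zv (A : E → (Fin n → ZMod p)) (T : Set E) (l : E →₀ ZMod p)
    (h : Finsupp.linearCombination (ZMod p) A l = 0) :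
    Finsupp.linearCombination (ZMod p) (splitMat p A T) l =
      (Finsupp.linearCombination (ZMod p) (splitMat p A T) l (Fin.last n)) • zv p n := by
  apply eq_smul_zv
  rw [lc_prj, h]

lemma matIndep_iff (A : E → (Fin n → ZMod p)) (S : Set E) :
    MatIndep p A S ↔ ∀ l ∈ Finsupp.supported (ZMod p) (ZMod p) S,
      Finsupp.linearCombination (ZMod p) A l = 0 → l = 0 := by
  unfold MatIndep
  exact linearIndepOn_iff

lemma matDep_iff (A : E → (Fin n → ZMod p)) (S : Set E) :
    ¬ MatIndep p A S ↔ ∃ l : E →₀ ZMod p, l ∈ Finsupp.supported (ZMod p) (ZMod p) S ∧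
      Finsupp.linearCombination (ZMod p) A l = 0 ∧ l ≠ 0 := by
  unfold MatIndep
  exact linearDepOn_iff'

/-- Forward direction: an NPT-circuit inside `S` puts `zv` in the span. -/
lemma forward (A : E → (Fin n → ZMod p)) (T : Set E) (S : Set E)
    (h : ∃ C ⊆ S, NPTCircuit p A T C) :
    zv p n ∈ Submodule.span (ZMod p) (splitMat p A T '' S) := by
  obtain ⟨C, hCS, hcirc, -, hindep⟩ := h
  obtain ⟨l, hl, hl0, hlne⟩ := (matDep_iff A C).1 hcirc.1
  have hsp := lc_smul_zv A T l hl0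
  set σ := Finsupp.linearCombination (ZMod p) (splitMat p A T) l (Fin.last n) with hσdef
  have hσ : σ ≠ 0 := by
    intro h0
    apply hlne
    refine (matIndep_iff (splitMat p A T) C).1 hindep l hl ?_
    rw [hsp, h0, zero_smul]
  have hz : zv p n = σ⁻¹ • Finsupp.linearCombination (ZMod p) (splitMat p A T) l := by
    rw [hsp, smul_smul, inv_mul_cancel₀ hσ, one_smul]
  rw [hz]
  refine Submodule.smul_mem _ _ ?_
  exact (Finsupp.mem_span_image_iff_linearCombination (ZMod p)).2
    ⟨l, Finsupp.supported_mono hCS hl, rfl⟩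

/-- Backward direction: if `zv` is in the span, `S` contains an NPT-circuit. -/
lemma backward (A : E → (Fin n → ZMod p)) (T : Set E) (S : Set E)
    (h : zv p n ∈ Submodule.span (ZMod p) (splitMat p A T '' S)) :
    ∃ C ⊆ S, NPTCircuit p A T C := by
  classical
  set P : (E →₀ ZMod p) → Prop := fun m =>
    m ∈ Finsupp.supported (ZMod p) (ZMod p) S ∧
      Finsupp.linearCombination (ZMod p) (splitMat p A T) m = zv p n with hP
  obtain ⟨l0, hl0s, hl0⟩ := (Finsupp.mem_span_image_iff_linearCombination (ZMod p)).1 h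
  have hex : ∃ k, ∃ m, P m ∧ m.support.card = k := ⟨_, l0, ⟨hl0s, hl0⟩, rfl⟩
  obtain ⟨l, hPl, hlcard⟩ := Nat.find_spec hex
  have hmin : ∀ m, P m → l.support.card ≤ m.support.card := by
    intro m hm
    rw [hlcard]
    exact Nat.find_le ⟨m, hm, rfl⟩
  obtain ⟨hlS, hlz⟩ := hPl
  have hA0 : Finsupp.linearCombination (ZMod p) A l = 0 := by
    rw [← lc_prj A T, hlz, prj_zv]
  have hlne : l ≠ 0 := by
    intro h0
    rw [h0, map_zero] at hlz
    exact zv_ne_zero hlz.symm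
  -- key minimality fact
  have key : ∀ d : E →₀ ZMod p, d.support ⊆ l.support →
      Finsupp.linearCombination (ZMod p) (splitMat p A T) d = 0 → d = 0 := by
    intro d hd hd0
    by_contra hdne
    obtain ⟨e0, he0⟩ := Finsupp.support_nonempty_iff.2 hdne
    have he0l : e0 ∈ l.support := hd he0
    set c : ZMod p := l e0 * (d e0)⁻¹ with hc
    set l' : E →₀ ZMod p := l - c • d with hl'
    have hl'z : Finsupp.linearCombination (ZMod p) (splitMat p A T) l' = zv p n := by
      rw [hl', map_sub, map_smul, hd0, smul_zero, sub_zero, hlz]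
    have hl'S : l' ∈ Finsupp.supported (ZMod p) (ZMod p) S := by
      refine Submodule.sub_mem _ hlS (Submodule.smul_mem _ _ ?_)
      rw [Finsupp.mem_supported]
      exact Set.Subset.trans (Finset.coe_subset.2 hd)
        ((Finsupp.mem_supported _ l).1 hlS)
    have hl'e0 : l' e0 = 0 := by
      have hde0 : d e0 ≠ 0 := Finsupp.mem_support_iff.1 he0
      have hv : l' e0 = l e0 - c * d e0 := by
        simp [hl', Finsupp.sub_apply, Finsupp.smul_apply, smul_eq_mul]
      rw [hv, hc, mul_assoc, inv_mul_cancel₀ hde0, mul_one, sub_self]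
    have hsub : l'.support ⊆ l.support.erase e0 := by
      intro x hx
      rw [Finset.mem_erase]
      have hxne : l' x ≠ 0 := Finsupp.mem_support_iff.1 hx
      constructor
      · intro hxe; exact hxne (hxe ▸ hl'e0)
      · by_contra hxl
        have hlx : l x = 0 := Finsupp.notMem_support_iff.1 hxl
        have hdx : d x = 0 := Finsupp.notMem_support_iff.1 (fun hmem => hxl (hd hmem))
        apply hxne
        simp [hl', Finsupp.sub_apply, Finsupp.smul_apply, hlx, hdx]
    have hcard : l'.support.card < l.support.card :=
      lt_of_le_of_lt (Finset.card_le_card hsub) (Finset.card_erase_lt_of_mem he0l)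
    exact absurd (hmin l' ⟨hl'S, hl'z⟩) (not_le.2 hcard)
  refine ⟨↑l.support, (Finsupp.mem_supported _ l).1 hlS, ⟨?_, ?_⟩, ?_, ?_⟩
  · -- dependent in A
    exact (matDep_iff A _).2 ⟨l, (Finsupp.mem_supported _ l).2 le_rfl, hA0, hlne⟩
  · -- proper subsets independent
    intro D hD
    refine (matIndep_iff A D).2 ?_
    intro d hdD hd0
    have hdsup : (d.support : Set E) ⊆ D := (Finsupp.mem_supported _ d).1 hdD
    have hdl : d.support ⊆ l.support :=
      Finset.coe_subset.1 (Set.Subset.trans hdsup hD.1)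
    have hsp := lc_smul_zv A T d hd0
    set σ := Finsupp.linearCombination (ZMod p) (splitMat p A T) d (Fin.last n) with hσdef
    by_cases hσ : σ = 0
    · exact key d hdl (by rw [hsp, hσ, zero_smul])
    · exfalso
      set m : E →₀ ZMod p := σ⁻¹ • d with hm
      have hmz : Finsupp.linearCombination (ZMod p) (splitMat p A T) m = zv p n := by
        rw [hm, map_smul, hsp, smul_smul, inv_mul_cancel₀ hσ, one_smul]
      have hmS : m ∈ Finsupp.supported (ZMod p) (ZMod p) S := by
        refine Submodule.smul_mem _ _ ?_
        rw [Finsupp.mem_supported]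
        exact Set.Subset.trans hdsup (Set.Subset.trans hD.1
          ((Finsupp.mem_supported _ l).1 hlS))
      have hmsup : m.support = d.support := Finsupp.support_smul_eq (inv_ne_zero hσ)
      have hdlt : d.support.card < l.support.card := by
        refine Finset.card_lt_card ?_
        rw [Finset.ssubset_iff_subset_ne]
        refine ⟨hdl, ?_⟩
        intro heq
        obtain ⟨x, hxC, hxD⟩ := Set.exists_of_ssubset hD
        have hxd : x ∉ d.support := fun hmem => hxD (hdsup hmem)
        rw [← heq] at hxC
        exact hxd (Finset.mem_coe.1 hxC)
      have := hmin m ⟨hmS, hmz⟩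
      rw [hmsup] at this
      omega
  · -- meets T
    by_contra hT
    rw [Set.not_nonempty_iff_eq_empty] at hT
    have hlast : Finsupp.linearCombination (ZMod p) (splitMat p A T) l (Fin.last n) = 1 := by
      rw [hlz, zv_last]
    rw [Finsupp.linearCombination_apply, Finsupp.sum, Finset.sum_apply] at hlast
    have hzero : ∀ e ∈ l.support, (l e • splitMat p A T e) (Fin.last n) = 0 := by
      intro e he
      have heT : e ∉ T := by
        intro heT
        have : e ∈ (↑l.support : Set E) ∩ T := ⟨Finset.mem_coe.2 he, heT⟩
        rw [hT] at this
        exact this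
      simp [splitMat, Fin.snoc_last, Set.indicator_of_notMem heT]
    rw [Finset.sum_congr rfl hzero, Finset.sum_const_zero] at hlast
    exact one_ne_zero hlast.symm
  · -- independent in splitMat
    refine (matIndep_iff (splitMat p A T) _).2 ?_
    intro d hdC hd0
    exact key d (Finset.coe_subset.1 ((Finsupp.mem_supported _ d).1 hdC)) hd0

open scoped Classical in
/-- The rank computation. -/
lemma rank_eq (A : E → (Fin n → ZMod p)) (T : Set E) (S : Set E) :
    matRank p (splitMat p A T) S =
      matRank p A S +
        (if zv p n ∈ Submodule.span (ZMod p) (splitMat p A T '' S) then 1 else 0) := by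
  classical
  set V := Submodule.span (ZMod p) (splitMat p A T '' S) with hV
  set f := (prj p n).comp V.subtype with hf
  have h1 := LinearMap.finrank_range_add_finrank_ker f
  have h2 : LinearMap.range f = Submodule.span (ZMod p) (A '' S) := by
    rw [hf, LinearMap.range_comp, Submodule.range_subtype, hV, Submodule.map_span,
      ← Set.image_comp, prj_splitMat]
  have hker : Module.finrank (ZMod p) (LinearMap.ker f) =
      (if zv p n ∈ V then 1 else 0) := by
    by_cases hz : zv p n ∈ V
    · rw [if_pos hz]
      set ev : LinearMap.ker f →ₗ[ZMod p] ZMod p :=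
        (LinearMap.proj (Fin.last n)).comp (V.subtype.comp (LinearMap.ker f).subtype) with hev
      have hinj : Function.Injective ev := by
        intro x y hxy
        have hx : prj p n ((x : V) : Fin (n+1) → ZMod p) = 0 := x.2
        have hy : prj p n ((y : V) : Fin (n+1) → ZMod p) = 0 := y.2
        have ex := eq_smul_zv hx
        have ey := eq_smul_zv hy
        have hxyv : ((x : V) : Fin (n+1) → ZMod p) = ((y : V) : Fin (n+1) → ZMod p) := by
          rw [ex, ey]
          have h' : ((x : V) : Fin (n+1) → ZMod p) (Fin.last n) =
              ((y : V) : Fin (n+1) → ZMod p) (Fin.last n) := hxy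
          rw [h']
        exact Subtype.ext (Subtype.ext hxyv)
      have hsurj : Function.Surjective ev := by
        intro c
        have hmem : c • zv p n ∈ V := Submodule.smul_mem _ _ hz
        have hkermem : (⟨c • zv p n, hmem⟩ : V) ∈ LinearMap.ker f := by
          show prj p n (c • zv p n) = 0
          rw [map_smul, prj_zv, smul_zero]
        refine ⟨⟨⟨c • zv p n, hmem⟩, hkermem⟩, ?_⟩
        show (c • zv p n) (Fin.last n) = c
        rw [Pi.smul_apply, zv_last, smul_eq_mul, mul_one]
      have := (LinearEquiv.ofBijective ev ⟨hinj, hsurj⟩).finrank_eq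
      rw [this, Module.finrank_self]
    · rw [if_neg hz]
      have hbot : LinearMap.ker f = ⊥ := by
        rw [eq_bot_iff]
        intro x hx
        have hx0 : prj p n ((x : V) : Fin (n+1) → ZMod p) = 0 := hx
        have ex := eq_smul_zv hx0
        set c := ((x : V) : Fin (n+1) → ZMod p) (Fin.last n) with hcdef
        by_cases hc : c = 0
        · rw [hc, zero_smul] at ex
          simp only [Submodule.mem_bot]
          exact Subtype.ext ex
        · exfalso
          apply hz
          have hzx : zv p n = c⁻¹ • ((x : V) : Fin (n+1) → ZMod p) := by
            rw [ex, smul_smul, inv_mul_cancel₀ hc, one_smul]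
          rw [hzx]
          exact Submodule.smul_mem _ _ (x : V).2
      rw [hbot, finrank_bot]
  have hmr : matRank p (splitMat p A T) S = Module.finrank (ZMod p) V := rfl
  have hmr2 : matRank p A S = Module.finrank (ZMod p) (LinearMap.range f) := by
    rw [h2]; rfl
  rw [hmr, ← h1, hmr2, hker]

end RankSplitAux

theorem rank_split_set {p n : ℕ} [Fact p.Prime] {E : Type}
    (A : E → (Fin n → ZMod p)) (T : Set E) (S : Set E) :
    (¬ (∃ C ⊆ S, NPTCircuit p A T C) → matRank p (splitMat p A T) S = matRank p A S) ∧
    ((∃ C ⊆ S, NPTCircuit p A T C) → matRank p (splitMat p A T) S = matRank p A S + 1) := by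
  classical
  have hre := RankSplitAux.rank_eq A T S
  constructor
  · intro h
    have hz : RankSplitAux.zv p n ∉ Submodule.span (ZMod p) (splitMat p A T '' S) :=
      fun hzv => h (RankSplitAux.backward A T S hzv)
    rw [hre, if_neg hz, add_zero]
  · intro h
    have hz := RankSplitAux.forward A T S h
    rw [hre, if_pos hz]
end

section
/- Let M = M[A] over GF(p) be a connected matroid on E with T ⊆ E, and let M_T = M[A_T]. If for every proper nonempty subset X ⊂ E, either X or E \ X contains an NPT-circuit of M, then M_T is connected. -/
open Set

section Aux

set_option maxHeartbeats 1000000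
set_option synthInstance.maxHeartbeats 1000000
set_option linter.unusedSectionVars false

variable {p n : ℕ} [Fact p.Prime] {E : Type} [Fintype E]

/-- Projection dropping the last coordinate. -/
noncomputable def projInit (p n : ℕ) : (Fin (n+1) → ZMod p) →ₗ[ZMod p] (Fin n → ZMod p) :=
  LinearMap.funLeft (ZMod p) (ZMod p) Fin.castSucc

noncomputable def eLast (p n : ℕ) : Fin (n+1) → ZMod p := Fin.snoc 0 1

lemma eLast_ne_zero : eLast p n ≠ 0 := by
  intro h
  have := congrFun h (Fin.last n)
  simp [eLast] at this

lemma projInit_eLast : projInit p n (eLast p n) = 0 := by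
  funext i
  simp [projInit, eLast, LinearMap.funLeft]

lemma mem_ker_projInit {v : Fin (n+1) → ZMod p} (h : projInit p n v = 0) :
    v = v (Fin.last n) • eLast p n := by
  funext i
  induction i using Fin.lastCases with
  | last => simp [eLast]
  | cast i =>
    have := congrFun h i
    simp [projInit, LinearMap.funLeft] at this
    simp [eLast, this]

lemma projInit_splitMat (A : E → Fin n → ZMod p) (T : Set E) (e : E) :
    projInit p n (splitMat p A T e) = A e := by
  funext i
  simp [projInit, splitMat, LinearMap.funLeft]

lemma map_span_splitMat (A : E → Fin n → ZMod p) (T : Set E) (S : Set E) :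
    Submodule.map (projInit p n) (Submodule.span (ZMod p) (splitMat p A T '' S))
      = Submodule.span (ZMod p) (A '' S) := by
  rw [Submodule.map_span, ← Set.image_comp]
  congr 1
  apply Set.image_congr'
  intro e
  exact projInit_splitMat A T e

lemma rank_le_splitRank (A : E → Fin n → ZMod p) (T : Set E) (S : Set E) :
    matRank p A S ≤ matRank p (splitMat p A T) S := by
  rw [matRank, matRank, ← map_span_splitMat A T S]
  exact Submodule.finrank_map_le _ _

lemma splitRank_le (A : E → Fin n → ZMod p) (T : Set E) (S : Set E) :
    matRank p (splitMat p A T) S ≤ matRank p A S + 1 := by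
  classical
  set W := Submodule.span (ZMod p) (splitMat p A T '' S) with hW
  have hrn := LinearMap.finrank_range_add_finrank_ker ((projInit p n).domRestrict W)
  rw [LinearMap.range_domRestrict, map_span_splitMat A T S] at hrn
  have hker : Module.finrank (ZMod p) (LinearMap.ker ((projInit p n).domRestrict W)) ≤ 1 := by
    have hmem : ∀ x : LinearMap.ker ((projInit p n).domRestrict W),
        (W.subtype.comp (LinearMap.ker ((projInit p n).domRestrict W)).subtype) x ∈
          Submodule.span (ZMod p) {eLast p n} := by
      intro x
      have hx := x.2
      simp only [LinearMap.mem_ker, LinearMap.domRestrict_apply] at hx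
      exact Submodule.mem_span_singleton.2 ⟨(x : W).1 (Fin.last n), (mem_ker_projInit hx).symm⟩
    have hinj : Function.Injective
        (LinearMap.codRestrict (Submodule.span (ZMod p) {eLast p n})
          (W.subtype.comp (LinearMap.ker ((projInit p n).domRestrict W)).subtype) hmem) := by
      intro a b hab
      have h1 := congrArg Subtype.val hab
      exact Subtype.ext (Subtype.ext h1)
    calc Module.finrank (ZMod p) (LinearMap.ker ((projInit p n).domRestrict W))
        ≤ Module.finrank (ZMod p) (Submodule.span (ZMod p) {eLast p n}) :=
          LinearMap.finrank_le_finrank_of_injective hinj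
      _ = 1 := finrank_span_singleton eLast_ne_zero
  have e1 : matRank p (splitMat p A T) S = Module.finrank (ZMod p) W := rfl
  have e2 : matRank p A S
      = Module.finrank (ZMod p) (Submodule.span (ZMod p) (A '' S)) := rfl
  omega

lemma splitRank_ge (A : E → Fin n → ZMod p) (T : Set E) (S : Set E)
    (h : eLast p n ∈ Submodule.span (ZMod p) (splitMat p A T '' S)) :
    matRank p A S + 1 ≤ matRank p (splitMat p A T) S := by
  classical
  set W := Submodule.span (ZMod p) (splitMat p A T '' S) with hW
  have hrn := LinearMap.finrank_range_add_finrank_ker ((projInit p n).domRestrict W)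
  rw [LinearMap.range_domRestrict, map_span_splitMat A T S] at hrn
  have hker : 0 < Module.finrank (ZMod p) (LinearMap.ker ((projInit p n).domRestrict W)) := by
    rw [Module.finrank_pos_iff]
    refine ⟨⟨⟨⟨eLast p n, h⟩, ?_⟩, 0, ?_⟩⟩
    · simp only [LinearMap.mem_ker, LinearMap.domRestrict_apply]
      exact projInit_eLast
    · intro hcon
      exact eLast_ne_zero (congrArg (fun x : LinearMap.ker ((projInit p n).domRestrict W) => ((x : W) : Fin (n+1) → ZMod p)) hcon)
  have e1 : matRank p (splitMat p A T) S = Module.finrank (ZMod p) W := rfl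
  have e2 : matRank p A S
      = Module.finrank (ZMod p) (Submodule.span (ZMod p) (A '' S)) := rfl
  omega

lemma eLast_mem_of_NPT (A : E → Fin n → ZMod p) (T : Set E) (C : Set E)
    (hC : NPTCircuit p A T C) :
    eLast p n ∈ Submodule.span (ZMod p) (splitMat p A T '' C) := by
  classical
  obtain ⟨⟨hdep, -⟩, -, hind⟩ := hC
  haveI : Fintype C := (Set.toFinite C).fintype
  rw [MatIndep, Fintype.not_linearIndependent_iff] at hdep
  obtain ⟨g, hg0, i₀, hi₀⟩ := hdep
  set w : Fin (n+1) → ZMod p := ∑ i : C, g i • splitMat p A T i with hw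
  have hwmem : w ∈ Submodule.span (ZMod p) (splitMat p A T '' C) :=
    Submodule.sum_mem _ (fun i _ => Submodule.smul_mem _ _
      (Submodule.subset_span ⟨i, i.2, rfl⟩))
  have hwproj : projInit p n w = 0 := by
    rw [hw, map_sum]
    simp only [map_smul, projInit_splitMat]
    exact hg0
  have hli : LinearIndependent (ZMod p) (fun x : C => splitMat p A T x.1) := hind
  have hwne : w ≠ 0 := by
    intro hcon
    exact hi₀ ((Fintype.linearIndependent_iff (R := ZMod p)
      (v := fun x : C => splitMat p A T x.1)).1 hli g (hw.symm.trans hcon) i₀)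
  have hwl : w (Fin.last n) ≠ 0 := by
    intro hl
    apply hwne
    rw [mem_ker_projInit hwproj, hl, zero_smul]
  obtain ⟨c, hc, hrepr⟩ : ∃ c : ZMod p, c ≠ 0 ∧ w = c • eLast p n :=
    ⟨w (Fin.last n), hwl, mem_ker_projInit hwproj⟩
  have hkey : eLast p n = c⁻¹ • w := by
    rw [hrepr, smul_smul, inv_mul_cancel₀ hc, one_smul]
  rw [hkey]
  exact Submodule.smul_mem _ _ hwmem

end Aux

theorem split_connected {p n : ℕ} [Fact p.Prime] {E : Type} [Fintype E]
    (A : E → (Fin n → ZMod p)) (T : Set E)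
    (hM : MatConnected p A)
    (h : ∀ X : Set E, X.Nonempty → X ≠ Set.univ →
      (∃ C ⊆ X, NPTCircuit p A T C) ∨ (∃ C ⊆ Xᶜ, NPTCircuit p A T C)) :
    MatConnected p (splitMat p A T) := by
  intro X hX hXc
  have hXne : X ≠ Set.univ := by
    intro hcon
    rcases hXc with ⟨x, hx⟩
    exact hx (hcon ▸ Set.mem_univ x)
  have hmain := hM X hX hXc
  have htop := splitRank_le A T (Set.univ : Set E)
  rcases h X hX hXne with ⟨C, hCX, hC⟩ | ⟨C, hCX, hC⟩
  · have h1 : matRank p A X + 1 ≤ matRank p (splitMat p A T) X :=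
      splitRank_ge A T X (Submodule.span_mono (Set.image_mono hCX)
        (eLast_mem_of_NPT A T C hC))
    have h2 : matRank p A Xᶜ ≤ matRank p (splitMat p A T) Xᶜ := rank_le_splitRank A T Xᶜ
    omega
  · have h1 : matRank p A Xᶜ + 1 ≤ matRank p (splitMat p A T) Xᶜ :=
      splitRank_ge A T Xᶜ (Submodule.span_mono (Set.image_mono hCX)
        (eLast_mem_of_NPT A T C hC))
    have h2 : matRank p A X ≤ matRank p (splitMat p A T) X := rank_le_splitRank A T X
    omega
end

section
/- Let M = M[A] over GF(p), T ⊆ E, M_T = M[A_T], M'_T = M[A'_T]. If C₁ and C₂ are NPT-circuits of M and I ⊆ E is independent in M with I disjoint from C₁ ∪ C₂ and C₁ ∩ C₂ = ∅, then C₁ ∪ C₂ ∪ I is not a circuit of M_T unless I = ∅. -/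
open Set

lemma lincomb_apply {E : Type} {p m : ℕ} (v : E → Fin m → ZMod p) (l : E →₀ ZMod p) (i : Fin m) :
    Finsupp.linearCombination (ZMod p) v l i =
      Finsupp.linearCombination (ZMod p) (fun e => v e i) l := by
  simp [Finsupp.linearCombination_apply, Finsupp.sum, Finset.sum_apply]

lemma total_splitMat {p n : ℕ} {E : Type} (A : E → (Fin n → ZMod p)) (T : Set E)
    (l : E →₀ ZMod p) (h : Finsupp.linearCombination (ZMod p) A l = 0) :
    Finsupp.linearCombination (ZMod p) (splitMat p A T) l
      = Fin.snoc (0 : Fin n → ZMod p) (Finsupp.linearCombination (ZMod p)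
          (T.indicator fun _ => (1 : ZMod p)) l) := by
  funext i
  refine Fin.lastCases ?_ ?_ i
  · rw [lincomb_apply, Fin.snoc_last]
    simp only [splitMat, Fin.snoc_last]
  · intro j
    have hj := congrFun h j
    rw [lincomb_apply] at hj
    rw [lincomb_apply, Fin.snoc_castSucc, Pi.zero_apply]
    simpa only [splitMat, Fin.snoc_castSucc, Pi.zero_apply] using hj

lemma dep_of_not_indep {p n : ℕ} {E : Type} {A : E → (Fin n → ZMod p)} {S : Set E}
    (h : ¬ MatIndep p A S) :
    ∃ l : E →₀ ZMod p, l ∈ Finsupp.supported (ZMod p) (ZMod p) S ∧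
      Finsupp.linearCombination (ZMod p) A l = 0 ∧ l ≠ 0 := by
  by_contra hc
  push_neg at hc
  exact h ((matIndep_iff A S).mpr fun l hl ht => hc l hl ht)

theorem NPT_union_indep_not_circuit {p n : ℕ} [Fact p.Prime] {E : Type}
    (A : E → (Fin n → ZMod p)) (T : Set E) (C₁ C₂ I : Set E)
    (h₁ : NPTCircuit p A T C₁) (h₂ : NPTCircuit p A T C₂)
    (hI : MatIndep p A I) (hdI : Disjoint I (C₁ ∪ C₂)) (hd : Disjoint C₁ C₂)
    (hcirc : MatCircuit p (splitMat p A T) (C₁ ∪ C₂ ∪ I)) :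
    I = ∅ := by
  classical
  by_contra hne
  have hIne : I.Nonempty := Set.nonempty_iff_ne_empty.mpr hne
  have hsub : C₁ ∪ C₂ ⊂ C₁ ∪ C₂ ∪ I := by
    refine ⟨Set.subset_union_left, fun h => ?_⟩
    obtain ⟨e, he⟩ := hIne
    exact Set.disjoint_left.mp hdI he (h (Or.inr he))
  have hind := (matIndep_iff (splitMat p A T) (C₁ ∪ C₂)).mp (hcirc.2 _ hsub)
  obtain ⟨l₁, hl₁s, hl₁t, hl₁0⟩ := dep_of_not_indep h₁.1.1
  obtain ⟨l₂, hl₂s, hl₂t, hl₂0⟩ := dep_of_not_indep h₂.1.1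
  have hsnoc₁ := total_splitMat A T l₁ hl₁t
  have hsnoc₂ := total_splitMat A T l₂ hl₂t
  set ind : E → ZMod p := T.indicator fun _ => (1 : ZMod p) with hinddef
  set s₁ : ZMod p := Finsupp.linearCombination (ZMod p) ind l₁ with hs₁def
  set s₂ : ZMod p := Finsupp.linearCombination (ZMod p) ind l₂ with hs₂def
  have hs₂ne : s₂ ≠ 0 := by
    intro h0
    refine hl₂0 ((matIndep_iff (splitMat p A T) C₂).mp h₂.2.2 l₂ hl₂s ?_)
    rw [hsnoc₂, h0]
    funext i
    refine Fin.lastCases ?_ (fun j => ?_) i <;> simp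
  have hs₁ne : s₁ ≠ 0 := by
    intro h0
    refine hl₁0 ((matIndep_iff (splitMat p A T) C₁).mp h₁.2.2 l₁ hl₁s ?_)
    rw [hsnoc₁, h0]
    funext i
    refine Fin.lastCases ?_ (fun j => ?_) i <;> simp
  have hls : (s₂ • l₁ - s₁ • l₂) ∈ Finsupp.supported (ZMod p) (ZMod p) (C₁ ∪ C₂) := by
    intro e he
    rcases Finset.mem_union.mp (Finsupp.support_sub he) with h | h
    · exact Or.inl (hl₁s (Finsupp.support_smul h))
    · exact Or.inr (hl₂s (Finsupp.support_smul h))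
  have hlt : Finsupp.linearCombination (ZMod p) (splitMat p A T) (s₂ • l₁ - s₁ • l₂) = 0 := by
    rw [map_sub, map_smul, map_smul, hsnoc₁, hsnoc₂]
    funext i
    refine Fin.lastCases ?_ (fun j => ?_) i <;>
      simp [mul_comm]
  have hl0 : s₂ • l₁ - s₁ • l₂ = 0 := hind _ hls hlt
  obtain ⟨e, he⟩ := Finsupp.ne_iff.mp hl₁0
  rw [Finsupp.coe_zero, Pi.zero_apply] at he
  have heC₁ : e ∈ C₁ := hl₁s (Finsupp.mem_support_iff.mpr he)
  have hl₂e : l₂ e = 0 := by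
    by_contra h0
    exact Set.disjoint_left.mp hd heC₁ (hl₂s (Finsupp.mem_support_iff.mpr h0))
  have hze := DFunLike.congr_fun hl0 e
  rw [Finsupp.sub_apply, Finsupp.smul_apply, Finsupp.smul_apply, hl₂e, smul_zero, sub_zero,
    Finsupp.coe_zero, Pi.zero_apply, smul_eq_mul] at hze
  rcases mul_eq_zero.mp hze with h | h
  · exact hs₂ne h
  · exact he h
end
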